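/- If G is a connected triangle-free graph with no full star-cutset and G is not a path on at most 4 vertices, then every subdivision G* of G is a connected triangle-free graph with no full star-cutset. -/

import Mathlib

/-! ## Frames and restricted frame graphs -/

/-- An axis-parallel box in `ℝ²`, i.e. a product `[x1,x2] × [y1,y2]` of two closed
nondegenerate intervals. -/
structure Box : Type where
  x1 : ℝ
  x2 : ℝ
  y1 : ℝ
  y2 : ℝ
  hx : x1 < x2
  hy : y1 < y2

namespace Box

/-- The region bounded by the frame of a box: the closed box itself. -/
def region (B : Box) : Set (ℝ × ℝ) :=
  {p : ℝ × ℝ | B.x1 ≤ p.1 ∧ p.1 ≤ B.x2 ∧ B.y1 ≤ p.2 ∧ p.2 ≤ B.y2}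

/-- The frame of a box: the topological boundary of the closed box. -/
def frame (B : Box) : Set (ℝ × ℝ) :=
  {p : ℝ × ℝ | p ∈ B.region ∧ (p.1 = B.x1 ∨ p.1 = B.x2 ∨ p.2 = B.y1 ∨ p.2 = B.y2)}

/-- The left side `{x1} × [y1,y2]` of a frame. -/
def leftSide (B : Box) : Set (ℝ × ℝ) :=
  {p : ℝ × ℝ | p.1 = B.x1 ∧ B.y1 ≤ p.2 ∧ p.2 ≤ B.y2}

/-- The right side `{x2} × [y1,y2]` of a frame. -/
def rightSide (B : Box) : Set (ℝ × ℝ) :=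
  {p : ℝ × ℝ | p.1 = B.x2 ∧ B.y1 ≤ p.2 ∧ p.2 ≤ B.y2}

/-- The top side `[x1,x2] × {y2}` of a frame. -/
def topSide (B : Box) : Set (ℝ × ℝ) :=
  {p : ℝ × ℝ | p.2 = B.y2 ∧ B.x1 ≤ p.1 ∧ p.1 ≤ B.x2}

/-- The bottom side `[x1,x2] × {y1}` of a frame. -/
def bottomSide (B : Box) : Set (ℝ × ℝ) :=
  {p : ℝ × ℝ | p.2 = B.y1 ∧ B.x1 ≤ p.1 ∧ p.1 ≤ B.x2}

/-- The four corners of a frame. -/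
def corners (B : Box) : Set (ℝ × ℝ) :=
  {(B.x1, B.y1), (B.x1, B.y2), (B.x2, B.y1), (B.x2, B.y2)}

/-- `Box.Inside inner outer` : the frame of `outer` contains the frame of `inner`,
i.e. the two frames are disjoint and the frame of `inner` is contained in the region
bounded by the frame of `outer`. -/
def Inside (inner outer : Box) : Prop :=
  inner.frame ∩ outer.frame = ∅ ∧ inner.frame ⊆ outer.region

/-- `Box.Outside B outer` : the frames are disjoint and `B` is not inside `outer`. -/
def Outside (B outer : Box) : Prop :=
  B.frame ∩ outer.frame = ∅ ∧ ¬ Inside B outer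

end Box

/-- A family of frames `(F v)` is a representation of the graph `G` as a restricted
frame graph: distinct vertices are adjacent iff their frames intersect, and the four
restrictions on the representation hold. -/
structure IsFrameRepresentation {V : Type} (G : SimpleGraph V) (F : V → Box) : Prop where
  /-- Distinct vertices are adjacent iff their frames intersect. -/
  adj_iff : ∀ u v : V, u ≠ v → (G.Adj u v ↔ ((F u).frame ∩ (F v).frame).Nonempty)
  /-- (1) Corners of a frame do not coincide with any point of another frame. -/
  corner_free : ∀ u v : V, u ≠ v → (F u).corners ∩ (F v).frame = ∅
  /-- (2) The left side of a frame does not intersect any other frame. -/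
  left_free : ∀ u v : V, u ≠ v → (F u).leftSide ∩ (F v).frame = ∅
  /-- (3) If the right side of a frame intersects a second frame, this right side
  intersects both the top and the bottom side of that second frame. -/
  right_cross : ∀ u v : V, u ≠ v →
    ((F u).rightSide ∩ (F v).frame).Nonempty →
    ((F u).rightSide ∩ (F v).topSide).Nonempty ∧
      ((F u).rightSide ∩ (F v).bottomSide).Nonempty
  /-- (4) If two frames intersect, no third frame is entirely contained in the
  intersection of the regions bounded by the two frames. -/
  not_nested : ∀ u v w : V, u ≠ v → w ≠ u → w ≠ v →
    ((F u).frame ∩ (F v).frame).Nonempty →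
    ¬ ((F w).frame ⊆ (F u).region ∩ (F v).region)

/-- A graph is a restricted frame graph if it admits a frame representation. -/
def IsRestrictedFrameGraph {V : Type} (G : SimpleGraph V) : Prop :=
  ∃ F : V → Box, IsFrameRepresentation G F

/-! ## Basic graph notions -/

/-- The closed neighborhood `N[u] = {u} ∪ N(u)`. -/
def closedNbhd {V : Type} (G : SimpleGraph V) (u : V) : Set V :=
  insert u (G.neighborSet u)

/-- `G` has a full star-cutset: for some vertex `u` the removal of `N[u]`
disconnects `G`. -/
def HasFullStarCutset {V : Type} (G : SimpleGraph V) : Prop :=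
  ∃ u : V, ¬ (G.induce ((closedNbhd G u)ᶜ)).Preconnected

/-- `v` is a cut-vertex of `G`: its removal disconnects `G`. -/
def IsCutVertex {V : Type} (G : SimpleGraph V) (v : V) : Prop :=
  ¬ (G.induce {u : V | u ≠ v}).Preconnected

/-- `G` is a path graph: its vertices can be enumerated `0, …, n-1` so that two
vertices are adjacent iff they are consecutive. -/
def IsPathGraph {V : Type} (G : SimpleGraph V) : Prop :=
  ∃ (n : ℕ) (e : V ≃ Fin n), ∀ u v : V,
    G.Adj u v ↔ ((e u : ℕ) + 1 = (e v : ℕ) ∨ (e v : ℕ) + 1 = (e u : ℕ))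

/-- `G` is a cycle graph (on at least 3 vertices). -/
def IsCycleGraphOn {V : Type} (G : SimpleGraph V) : Prop :=
  ∃ n : ℕ, 3 ≤ n ∧ ∃ e : V ≃ Fin n, ∀ u v : V,
    G.Adj u v ↔ (((e u : ℕ) + 1) % n = (e v : ℕ) ∨ ((e v : ℕ) + 1) % n = (e u : ℕ))

/-- `x` is a leaf of `T`: it has exactly one neighbor. -/
def IsLeaf {V : Type} (T : SimpleGraph V) (x : V) : Prop :=
  (T.neighborSet x).ncard = 1

/-- `G` is a chandelier with pivot `v`: `G - v` is a tree `T` and `v` is adjacent to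
exactly the leaves of `T`. -/
def IsChandelierWithPivot {V : Type} (G : SimpleGraph V) (v : V) : Prop :=
  (G.induce {u : V | u ≠ v}).IsTree ∧
    ∀ u : ↥{u : V | u ≠ v}, (G.Adj v u.val ↔ IsLeaf (G.induce {u : V | u ≠ v}) u)

/-- `G` is a chandelier. -/
def IsChandelier {V : Type} (G : SimpleGraph V) : Prop :=
  ∃ v : V, IsChandelierWithPivot G v

/-- `G` is a luxury chandelier: a chandelier (with pivot `v` and tree `T = G - v`)
such that the neighbor in `T` of each leaf of `T` has degree 2 in `T`. -/
def IsLuxuryChandelier {V : Type} (G : SimpleGraph V) : Prop :=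
  ∃ v : V, IsChandelierWithPivot G v ∧
    ∀ x y : ↥{u : V | u ≠ v}, (G.induce {u : V | u ≠ v}).Adj x y →
      IsLeaf (G.induce {u : V | u ≠ v}) x →
      ((G.induce {u : V | u ≠ v}).neighborSet y).ncard = 2

/-! ## Multigraphs and subdivisions -/

/-- A loopless multigraph on vertex set `V`: a symmetric multiplicity function. -/
structure Multigraph (V : Type) where
  m : V → V → ℕ
  symm : ∀ u v : V, m u v = m v u
  loopless : ∀ v : V, m v v = 0

/-- The multigraph associated with a simple graph (each edge has multiplicity 1). -/
noncomputable def SimpleGraph.toMultigraph {V : Type} (G : SimpleGraph V) : Multigraph V where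
  m u v := @ite ℕ (G.Adj u v) (Classical.dec _) 1 0
  symm u v := by
    beta_reduce
    by_cases h : G.Adj u v
    · rw [if_pos h, if_pos h.symm]
    · rw [if_neg h, if_neg (fun h' => h h'.symm)]
  loopless v := by
    beta_reduce
    rw [if_neg (SimpleGraph.irrefl G)]

/-- The interior (set of internal vertices) of a walk. -/
def walkInterior {V : Type} {G : SimpleGraph V} {a b : V} (p : G.Walk a b) : Set V :=
  {w : V | w ∈ p.support ∧ w ≠ a ∧ w ≠ b}

/-- A witness that the simple graph `H` is a `≥k`-subdivision of the multigraph `G`: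
each edge of `G` (counted with multiplicity) is replaced by a path with at least
`k+1` edges between (the images of) its endpoints, these paths being internally
disjoint from each other and from the branch vertices, and covering all of `H`. -/
structure MultiSubdivision {V W : Type} (G : Multigraph V) (H : SimpleGraph W) (k : ℕ) where
  /-- the embedding of branch vertices -/
  f : V ↪ W
  /-- the path replacing the `i`-th parallel edge between `u` and `v` -/
  path : ∀ u v : V, Fin (G.m u v) → H.Walk (f u) (f v)
  path_symm : ∀ (u v : V) (i : Fin (G.m u v)),
    path v u (Fin.cast (G.symm u v) i) = (path u v i).reverse
  path_ne : ∀ (u v : V) (i i' : Fin (G.m u v)), (i : ℕ) ≠ (i' : ℕ) →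
    path u v i ≠ path u v i'
  isPath : ∀ (u v : V) (i : Fin (G.m u v)), (path u v i).IsPath
  length_le : ∀ (u v : V) (i : Fin (G.m u v)), k + 1 ≤ (path u v i).length
  /-- the paths are internally disjoint from the branch vertices -/
  interior_avoid : ∀ (u v : V) (i : Fin (G.m u v)) (x : V),
    f x ∉ walkInterior (path u v i)
  /-- distinct paths are pairwise internally disjoint -/
  interior_disjoint : ∀ (u v : V) (i : Fin (G.m u v)) (u' v' : V) (i' : Fin (G.m u' v')),
    (walkInterior (path u v i) ∩ walkInterior (path u' v' i')).Nonempty →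
    (u = u' ∧ v = v' ∧ (i : ℕ) = (i' : ℕ)) ∨ (u = v' ∧ v = u' ∧ (i : ℕ) = (i' : ℕ))
  /-- every vertex of `H` is a branch vertex or an internal vertex of a path -/
  vertex_cover : ∀ w : W, (∃ x : V, f x = w) ∨
    ∃ (u v : V) (i : Fin (G.m u v)), w ∈ walkInterior (path u v i)
  /-- every edge of `H` lies on one of the paths -/
  edge_cover : ∀ e ∈ H.edgeSet, ∃ (u v : V) (i : Fin (G.m u v)), e ∈ (path u v i).edges

/-- `H` is a `≥k`-subdivision of the multigraph `G`. -/
def IsSubdivisionGE {V W : Type} (G : Multigraph V) (k : ℕ) (H : SimpleGraph W) : Prop :=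
  Nonempty (MultiSubdivision G H k)

/-- `H` is a subdivision of the simple graph `G` (every edge is replaced by a path
with at least one edge). -/
def IsSubdivision {V W : Type} (G : SimpleGraph V) (H : SimpleGraph W) : Prop :=
  IsSubdivisionGE G.toMultigraph 0 H

namespace Multigraph

/-- The underlying simple graph of a multigraph. -/
def support {V : Type} (G : Multigraph V) : SimpleGraph V where
  Adj u v := 0 < G.m u v
  symm := by
    constructor
    intro u v h
    show 0 < G.m v u
    rw [G.symm v u]
    exact h
  loopless := by
    constructor
    intro v h
    change 0 < G.m v v at h
    rw [G.loopless v] at h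
    exact Nat.lt_irrefl 0 h

/-- A multigraph is connected if its underlying simple graph is. -/
def Connected {V : Type} (G : Multigraph V) : Prop :=
  G.support.Connected

/-- A multigraph is 2-connected if it is connected, has at least two vertices, and
deleting any single vertex leaves it connected. -/
def TwoConnected {V : Type} (G : Multigraph V) : Prop :=
  G.support.Connected ∧ (∃ u v : V, u ≠ v) ∧
    ∀ v : V, (G.support.induce {u : V | u ≠ v}).Connected

/-- `v` is a feedback vertex of the multigraph `G`: `G - v` contains no cycle
(where a pair of parallel edges forms a cycle of length 2). -/
def IsFeedbackVertex {V : Type} (G : Multigraph V) (v : V) : Prop :=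
  (G.support.induce {u : V | u ≠ v}).IsAcyclic ∧
    ∀ u w : V, u ≠ v → w ≠ v → G.m u w ≤ 1

end Multigraph

/-! ## Induced cycles and big vertices -/

/-- `C` induces a cycle in `G`. -/
def IsInducedCycle {V : Type} (G : SimpleGraph V) (C : Set V) : Prop :=
  IsCycleGraphOn (G.induce C)

/-- `v` is a big vertex of the (induced cycle on) `C` with respect to the frame
representation `F`: `v ∈ C` and `F v` contains the frame of every vertex of `C`
outside `N[v]`. -/
def IsBigVertexOf {V : Type} (G : SimpleGraph V) (F : V → Box) (C : Set V) (v : V) : Prop :=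
  v ∈ C ∧ ∀ u ∈ C, u ≠ v → ¬ G.Adj v u → Box.Inside (F u) (F v)

/-- `v` is a big vertex of the representation `F`: it is a big vertex of some
induced cycle of `G`. -/
def IsBigVertex {V : Type} (G : SimpleGraph V) (F : V → Box) (v : V) : Prop :=
  ∃ C : Set V, IsInducedCycle G C ∧ IsBigVertexOf G F C v

/-! ## Gluing a chandelier onto a vertex -/

/-- The graph obtained from the disjoint union of `G₁` and `G₂` by identifying the
vertex `v` of `G₁` with the vertex `p` of `G₂`. -/
def glueAt {V₁ V₂ : Type} (G₁ : SimpleGraph V₁) (G₂ : SimpleGraph V₂) (v : V₁) (p : V₂) :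
    SimpleGraph (V₁ ⊕ {x : V₂ // x ≠ p}) :=
  SimpleGraph.fromRel (fun a b =>
    match a, b with
    | Sum.inl u, Sum.inl w => G₁.Adj u w
    | Sum.inr u, Sum.inr w => G₂.Adj u.val w.val
    | Sum.inl u, Sum.inr w => u = v ∧ G₂.Adj p w.val
    | Sum.inr _, Sum.inl _ => False)

/-! ## The multigraphs `Ĥ₁` and `Ĥ₂` -/

/-- The multiplicity matrix of `Ĥ₁` (vertices `a₁ = 0`, `b₁ = 1`, `v₁ = 2`, `v₂ = 3`,
`a₂ = 4`, `b₂ = 5`). -/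
def H1hatMatrix : Matrix (Fin 6) (Fin 6) ℕ :=
  !![0, 2, 1, 0, 0, 0;
     2, 0, 1, 0, 0, 0;
     1, 1, 0, 1, 0, 0;
     0, 0, 1, 0, 1, 1;
     0, 0, 0, 1, 0, 2;
     0, 0, 0, 1, 2, 0]

/-- The multigraph `Ĥ₁`: two disjoint digons `a₁b₁`, `a₂b₂`, and single edges
`a₁v₁`, `b₁v₁`, `v₁v₂`, `a₂v₂`, `b₂v₂`. -/
def H1hat : Multigraph (Fin 6) where
  m u v := H1hatMatrix u v
  symm := by
    intro u v
    fin_cases u <;> fin_cases v <;> rfl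
  loopless := by decide

/-- The multiplicity matrix of `Ĥ₂` (vertices `a₁ = 0`, `b₁ = 1`, `v = 2`,
`a₂ = 3`, `b₂ = 4`). -/
def H2hatMatrix : Matrix (Fin 5) (Fin 5) ℕ :=
  !![0, 2, 1, 0, 0;
     2, 0, 1, 0, 0;
     1, 1, 0, 1, 1;
     0, 0, 1, 0, 2;
     0, 0, 1, 2, 0]

/-- The multigraph `Ĥ₂`: two digons `a₁b₁`, `a₂b₂`, and single edges
`a₁v`, `b₁v`, `a₂v`, `b₂v`. -/
def H2hat : Multigraph (Fin 5) where
  m u v := H2hatMatrix u v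
  symm := by
    intro u v
    fin_cases u <;> fin_cases v <;> rfl
  loopless := by decide

/-! ## Subdivisions of `K₄` and their type -/

/-- The complete graph on four vertices. -/
def K4 : SimpleGraph (Fin 4) := ⊤

/-- The set of edges of `K₄` that are subdivided at least once in the subdivision
witnessed by `S` (i.e. replaced by a path with at least two edges). -/
def subdividedEdges {W : Type} {H : SimpleGraph W}
    (S : MultiSubdivision K4.toMultigraph H 0) : Set (Sym2 (Fin 4)) :=
  {e : Sym2 (Fin 4) | ∃ (u v : Fin 4) (i : Fin (K4.toMultigraph.m u v)),
    e = s(u, v) ∧ 2 ≤ (S.path u v i).length}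

/-! ## Adding a twin -/

/-- The graph obtained from `G` by adding a twin of `v`: a new vertex, non-adjacent
to `v`, whose neighborhood is exactly `N(v)`. -/
def addTwin {V : Type} (G : SimpleGraph V) (v : V) : SimpleGraph (V ⊕ Unit) :=
  SimpleGraph.fromRel (fun a b =>
    match a, b with
    | Sum.inl u, Sum.inl w => G.Adj u w
    | Sum.inr _, Sum.inl u => G.Adj v u
    | _, _ => False)

/-! ## The construction of Burling and Pawlik et al. -/

/-- A graph-stable set pair: a graph together with a collection of sets of vertices
(intended: stable sets). -/
structure GSPair : Type 1 where
  V : Type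
  G : SimpleGraph V
  S : Set (Set V)

namespace GSPair

/-- The vertex type of `next P`: the original vertices, the vertices `(s, u)` of the
copy `H_s` of the graph for each `s ∈ 𝒮`, and the new vertices `v_{s,t}`. -/
abbrev nextVertex (P : GSPair) : Type :=
  P.V ⊕ ((↥P.S × P.V) ⊕ (↥P.S × ↥P.S))

/-- The adjacency generator for the graph of `next P`. -/
def nextRel (P : GSPair) : P.nextVertex → P.nextVertex → Prop
  | Sum.inl u, Sum.inl v => P.G.Adj u v
  | Sum.inr (Sum.inl (s, u)), Sum.inr (Sum.inl (t, v)) => s = t ∧ P.G.Adj u v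
  | Sum.inr (Sum.inr (s, t)), Sum.inr (Sum.inl (s', v)) => s = s' ∧ v ∈ (t : Set P.V)
  | _, _ => False

/-- The procedure `next`: add a disjoint copy `H_s` of the graph for each `s ∈ 𝒮`, a
vertex `v_{s,t}` whose neighborhood is exactly the copy of `t` inside `H_s` for all
`s, t ∈ 𝒮`, and take as new collection of stable sets all `s ∪ t_s` and
`s ∪ {v_{s,t}}`. -/
def next (P : GSPair) : GSPair where
  V := P.nextVertex
  G := SimpleGraph.fromRel P.nextRel
  S := {A : Set P.nextVertex | ∃ s t : ↥P.S,
    A = (Sum.inl '' (s : Set P.V) : Set P.nextVertex) ∪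
        ((fun u : P.V => (Sum.inr (Sum.inl (s, u)) : P.nextVertex)) '' (t : Set P.V)) ∨
    A = (Sum.inl '' (s : Set P.V) : Set P.nextVertex) ∪ {Sum.inr (Sum.inr (s, t))}}

/-- The starting pair: a single vertex, with the single stable set consisting of
that vertex. -/
def base : GSPair := ⟨PUnit, ⊥, {Set.univ}⟩

/-- `P` is an induced subgraph-stable set pair of `Q`. -/
def IsInducedSubpair (P Q : GSPair) : Prop :=
  ∃ f : P.V ↪ Q.V, (∀ u v : P.V, P.G.Adj u v ↔ Q.G.Adj (f u) (f v)) ∧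
    ∀ A ∈ P.S, ∃ B ∈ Q.S, A = f ⁻¹' B

/-- A graph-stable set pair is constructible if it is an induced subgraph-stable set
pair of some iterate of `next` on the starting pair. -/
def Constructible (P : GSPair) : Prop :=
  ∃ i : ℕ, IsInducedSubpair P (next^[i] base)

end GSPair

/-!
Since `G` is triangle-free, has no full star-cutset and is not a short path, it has no pendant
vertex, so every edge `xy` extends to an induced path `x y z`. Hence every neighbour of `x` has a
neighbour in the connected set `N[x]ᶜ`; this makes `G - x - S` connected for `S ⊆ N(x)`, and
`G - D - uv` connected for an edge `uv` and `D ⊆ {u, v}`.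

In `G*`, the closed neighbourhood of a branch vertex `x` is `x` together with the first vertices of
the paths leaving `x`, and the closed neighbourhood of an interior vertex `w` lies on the path
through `w`, whose ends `u, v` are the only branch vertices it can contain. Removing it, the
surviving branch vertices stay connected by lifting walks of `G - x - S`, resp. `G - D - uv`, edge
by edge to paths of `G*`, and every other surviving vertex reaches a surviving branch vertex along
its own path.
-/

namespace SimpleGraph

variable {V W : Type} {G : SimpleGraph V} {H : SimpleGraph W}

def ReachableIn (G : SimpleGraph V) (s : Set V) (a b : V) : Prop :=
  ∃ p : G.Walk a b, ∀ z ∈ p.support, z ∈ s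

namespace ReachableIn

variable {s t : Set V} {a b c : V}

lemma refl (ha : a ∈ s) : G.ReachableIn s a a :=
  ⟨.nil, by simpa using ha⟩

lemma symm : G.ReachableIn s a b → G.ReachableIn s b a := fun ⟨p, hp⟩ =>
  ⟨p.reverse, fun z hz => hp z (by simpa using hz)⟩

lemma trans : G.ReachableIn s a b → G.ReachableIn s b c → G.ReachableIn s a c :=
  fun ⟨p, hp⟩ ⟨q, hq⟩ => ⟨p.append q, fun z hz => by
    rcases (Walk.mem_support_append_iff p q).mp hz with hz | hz
    exacts [hp z hz, hq z hz]⟩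

lemma mono (hst : s ⊆ t) : G.ReachableIn s a b → G.ReachableIn t a b := fun ⟨p, hp⟩ =>
  ⟨p, fun z hz => hst (hp z hz)⟩

lemma reachable : G.ReachableIn s a b → G.Reachable a b := fun ⟨p, _⟩ => ⟨p⟩

lemma right_mem : G.ReachableIn s a b → b ∈ s := fun ⟨p, hp⟩ => hp b p.end_mem_support

lemma exists_adj_of_ne (h : G.ReachableIn s a b) (hab : a ≠ b) : ∃ c ∈ s, G.Adj a c := by
  obtain ⟨p, hp⟩ := h
  cases p with
  | nil => exact absurd rfl hab
  | cons h q => exact ⟨_, hp _ (by simp), h⟩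

lemma lift {t : Set W} (g : V → W) (hgs : ∀ y ∈ s, g y ∈ t)
    (hg : ∀ y ∈ s, ∀ z ∈ s, G.Adj y z → H.ReachableIn t (g y) (g z)) :
    G.ReachableIn s a b → H.ReachableIn t (g a) (g b) := by
  rintro ⟨p, hp⟩
  induction p with
  | nil => exact refl (hgs _ (hp _ (by simp)))
  | cons h q ih =>
    exact (hg _ (hp _ (by simp)) _ (hp _ (by simp)) h).trans
      (ih fun z hz => hp z (by simp [hz]))

lemma of_core (A : Set V) (hA : ∀ a ∈ A, ∀ b ∈ A, G.ReachableIn s a b)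
    (hs : ∀ a ∈ s, ∃ b ∈ A, G.ReachableIn s a b) :
    ∀ a ∈ s, ∀ b ∈ s, G.ReachableIn s a b := by
  intro a ha b hb
  obtain ⟨a', ha', haa'⟩ := hs a ha
  obtain ⟨b', hb', hbb'⟩ := hs b hb
  exact (haa'.trans (hA a' ha' b' hb')).trans hbb'.symm

end ReachableIn

lemma Adj.reachableIn {s : Set V} {a b : V} (h : G.Adj a b) (ha : a ∈ s) (hb : b ∈ s) :
    G.ReachableIn s a b :=
  ⟨h.toWalk, by simp [ha, hb]⟩

lemma eq_or_eq_or_mem_walkInterior {u v z : V} {p : G.Walk u v} (hz : z ∈ p.support) :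
    z = u ∨ z = v ∨ z ∈ walkInterior p := by
  by_cases hu : z = u
  · exact .inl hu
  by_cases hv : z = v
  · exact .inr (.inl hv)
  exact .inr (.inr ⟨hz, hu, hv⟩)

lemma Walk.reachableIn_of_walkInterior_subset {s : Set V} {u v : V} (p : G.Walk u v)
    (hu : u ∈ s) (hv : v ∈ s) (hp : walkInterior p ⊆ s) : G.ReachableIn s u v := by
  refine ⟨p, fun z hz => ?_⟩
  rcases eq_or_eq_or_mem_walkInterior hz with rfl | rfl | hz
  exacts [hu, hv, hp hz]

lemma preconnected_induce_iff_reachableIn {s : Set V} :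
    (G.induce s).Preconnected ↔ ∀ a ∈ s, ∀ b ∈ s, G.ReachableIn s a b := by
  refine ⟨fun h a ha b hb => ?_, fun h ⟨a, ha⟩ ⟨b, hb⟩ => ?_⟩
  · obtain ⟨p⟩ := h ⟨a, ha⟩ ⟨b, hb⟩
    have hp : ∀ z ∈ (p.map (Embedding.induce s).toHom).support, z ∈ s := by
      intro z hz
      rw [Walk.support_map, List.mem_map] at hz
      obtain ⟨z', -, rfl⟩ := hz
      exact z'.2
    exact ⟨_, hp⟩
  · obtain ⟨p, hp⟩ := h a ha b hb
    exact ⟨p.induce s hp⟩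

lemma mem_compl_closedNbhd_iff {x a : V} :
    a ∈ (closedNbhd G x)ᶜ ↔ a ≠ x ∧ ¬ G.Adj x a := by
  simp [closedNbhd, not_or]

namespace Walk

variable {u v a c w : V} {p : G.Walk u v}

lemma IsPath.eq_of_mem_support_takeUntil_of_mem_support_dropUntil [DecidableEq V]
    (hp : p.IsPath) (ha : a ∈ p.support) (h₁ : c ∈ (p.takeUntil a ha).support)
    (h₂ : c ∈ (p.dropUntil a ha).support) : c = a := by
  by_contra hca
  have hnd := hp.support_nodup
  rw [← p.take_spec ha, support_append] at hnd
  rw [← cons_tail_support, List.mem_cons] at h₂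
  exact List.disjoint_of_nodup_append hnd h₁ (h₂.resolve_left hca)

lemma IsPath.eq_of_start_mem_support_dropUntil [DecidableEq V] (hp : p.IsPath)
    (ha : a ∈ p.support) (hu : u ∈ (p.dropUntil a ha).support) : u = a :=
  hp.eq_of_mem_support_takeUntil_of_mem_support_dropUntil ha (start_mem_support _) hu

lemma IsPath.mem_support_takeUntil_or_eq [DecidableEq V] (hp : p.IsPath) (ha : a ∈ p.support)
    (hc : c ∈ (p.takeUntil a ha).support) (hwc : s(w, c) ∈ p.edges) :
    w ∈ (p.takeUntil a ha).support ∨ c = a := by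
  rw [← p.take_spec ha, edges_append, List.mem_append] at hwc
  rcases hwc with hwc | hwc
  · exact .inl (fst_mem_support_of_mem_edges _ hwc)
  · exact .inr (hp.eq_of_mem_support_takeUntil_of_mem_support_dropUntil ha hc
      (snd_mem_support_of_mem_edges _ hwc))

lemma IsPath.mem_support_dropUntil_or_eq [DecidableEq V] (hp : p.IsPath) (ha : a ∈ p.support)
    (hc : c ∈ (p.dropUntil a ha).support) (hwc : s(w, c) ∈ p.edges) :
    w ∈ (p.dropUntil a ha).support ∨ c = a := by
  rw [← p.take_spec ha, edges_append, List.mem_append] at hwc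
  rcases hwc with hwc | hwc
  · exact .inr (hp.eq_of_mem_support_takeUntil_of_mem_support_dropUntil ha
      (snd_mem_support_of_mem_edges _ hwc) hc)
  · exact .inl (fst_mem_support_of_mem_edges _ hwc)

lemma IsPath.reachableIn_dropUntil (hp : p.IsPath) (ha : a ∈ p.support) (hau : a ≠ u) :
    G.ReachableIn {c | c ∈ p.support ∧ c ≠ u ∧ (s(u, c) ∈ p.edges → c = a)} a v := by
  classical
  have hu : u ∉ (p.dropUntil a ha).support := fun h =>
    hau (hp.eq_of_start_mem_support_dropUntil ha h).symm
  exact ⟨p.dropUntil a ha, fun c hc => ⟨p.support_dropUntil_subset_support ha hc,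
    fun hcu => hu (hcu ▸ hc),
    fun huc => (hp.mem_support_dropUntil_or_eq ha hc huc).resolve_left hu⟩⟩

lemma IsPath.exists_reachableIn_avoiding (hp : p.IsPath)
    (ha : a ∈ p.support) (haw : a ≠ w) (hwa : s(w, a) ∉ p.edges) :
    ∃ e, (e = u ∨ e = v) ∧
      G.ReachableIn {c | c ∈ p.support ∧ c ≠ w ∧ s(w, c) ∉ p.edges} a e := by
  classical
  by_cases hwt : w ∈ (p.takeUntil a ha).support
  · have hwd : w ∉ (p.dropUntil a ha).support := fun hwd =>
      haw (hp.eq_of_mem_support_takeUntil_of_mem_support_dropUntil ha hwt hwd).symm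
    refine ⟨v, .inr rfl, p.dropUntil a ha, fun c hc =>
      ⟨p.support_dropUntil_subset_support ha hc, fun hcw => hwd (hcw ▸ hc), fun hwc => ?_⟩⟩
    rcases hp.mem_support_dropUntil_or_eq ha hc hwc with h | rfl
    exacts [hwd h, hwa hwc]
  · refine ⟨u, .inl rfl, (p.takeUntil a ha).reverse, fun c hc => ?_⟩
    rw [support_reverse, List.mem_reverse] at hc
    refine ⟨p.support_takeUntil_subset_support ha hc, fun hcw => hwt (hcw ▸ hc),
      fun hwc => ?_⟩
    rcases hp.mem_support_takeUntil_or_eq ha hc hwc with h | rfl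
    exacts [hwt h, hwa hwc]

lemma IsPath.not_triangle {a b c : V} (hp : p.IsPath) (hab : a ≠ b) (hac : a ≠ c)
    (hbc : b ≠ c) (h₁ : s(a, b) ∈ p.edges) (h₂ : s(b, c) ∈ p.edges)
    (h₃ : s(a, c) ∈ p.edges) : False := by
  induction p with
  | nil => simp at h₁
  | @cons u m v h q ih =>
    have hq := hp.of_cons
    have hsnd : ∀ {z}, s(u, z) ∈ (cons h q).edges → z = m := fun hz => by
      simpa using hp.eq_snd_of_mem_edges hz
    by_cases hua : u = a
    · subst hua
      exact hbc ((hsnd h₁).trans (hsnd h₃).symm)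
    by_cases hub : u = b
    · subst hub
      exact hac ((hsnd (Sym2.eq_swap ▸ h₁)).trans (hsnd h₂).symm)
    by_cases huc : u = c
    · subst huc
      exact hab ((hsnd (Sym2.eq_swap ▸ h₃)).trans (hsnd (Sym2.eq_swap ▸ h₂)).symm)
    have hr : ∀ {x y}, u ≠ x → u ≠ y →
        s(x, y) ∈ (cons h q).edges → s(x, y) ∈ q.edges := by
      intro x y hx hy hxy
      rw [edges_cons, List.mem_cons] at hxy
      exact hxy.resolve_left fun he => by
        rcases Sym2.eq_iff.mp he with ⟨rfl, -⟩ | ⟨-, rfl⟩ <;> contradiction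
    exact ih hq (hr hua hub h₁) (hr hub huc h₂) (hr hua huc h₃)

end Walk

lemma not_adj_of_cliqueFree_three (htf : G.CliqueFree 3) {a b c : V} (hab : G.Adj a b)
    (hac : G.Adj a c) : ¬ G.Adj b c := fun hbc => by
  classical
  exact htf {a, b, c} (is3Clique_triple_iff.mpr ⟨hab, hac, hbc⟩)

lemma reachableIn_compl_closedNbhd (hnsc : ¬ HasFullStarCutset G) (x : V) :
    ∀ a ∈ (closedNbhd G x)ᶜ, ∀ b ∈ (closedNbhd G x)ᶜ,
      G.ReachableIn (closedNbhd G x)ᶜ a b :=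
  preconnected_induce_iff_reachableIn.mp (not_not.mp fun h => hnsc ⟨x, h⟩)

lemma isPathGraph_of_bijective [Fintype V] {n : ℕ} (f : Fin n → V) (hf : f.Bijective)
    (hadj : ∀ i j, G.Adj (f i) (f j) ↔ (i : ℕ) + 1 = j ∨ (j : ℕ) + 1 = i) :
    IsPathGraph G ∧ Fintype.card V = n := by
  refine ⟨⟨n, (Equiv.ofBijective f hf).symm, fun u v => ?_⟩,
    by simp [← Fintype.card_of_bijective hf]⟩
  simpa only [Equiv.ofBijective_apply_symm_apply] using
    hadj ((Equiv.ofBijective f hf).symm u) ((Equiv.ofBijective f hf).symm v)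

lemma isPathGraph_two [Fintype V] {a b : V} (hcov : ∀ v, v = a ∨ v = b) (hab : G.Adj a b) :
    IsPathGraph G ∧ Fintype.card V = 2 := by
  refine isPathGraph_of_bijective ![a, b] ⟨fun i j hij => ?_, fun v => ?_⟩ fun i j => ?_
  · fin_cases i <;> fin_cases j <;> first | rfl | simp [hab.ne, hab.ne'] at hij
  · rcases hcov v with rfl | rfl
    exacts [⟨0, rfl⟩, ⟨1, rfl⟩]
  · fin_cases i <;> fin_cases j <;> simp [hab, hab.symm]

lemma isPathGraph_three [Fintype V] {a b c : V} (hcov : ∀ v, v = a ∨ v = b ∨ v = c)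
    (hab : G.Adj a b) (hbc : G.Adj b c) (hac : ¬ G.Adj a c) (hac' : a ≠ c) :
    IsPathGraph G ∧ Fintype.card V = 3 := by
  refine isPathGraph_of_bijective ![a, b, c] ⟨fun i j hij => ?_, fun v => ?_⟩ fun i j => ?_
  · fin_cases i <;> fin_cases j <;> first | rfl |
      simp [hab.ne, hab.ne', hbc.ne, hbc.ne', hac', hac'.symm] at hij
  · rcases hcov v with rfl | rfl | rfl
    exacts [⟨0, rfl⟩, ⟨1, rfl⟩, ⟨2, rfl⟩]
  · fin_cases i <;> fin_cases j <;> simp [hab, hab.symm, hbc, hbc.symm, hac, adj_comm _ c a]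

lemma isPathGraph_four [Fintype V] {a b c d : V} (hcov : ∀ v, v = a ∨ v = b ∨ v = c ∨ v = d)
    (hab : G.Adj a b) (hbc : G.Adj b c) (hcd : G.Adj c d) (hac : ¬ G.Adj a c)
    (hbd : ¬ G.Adj b d) (had : ¬ G.Adj a d) :
    IsPathGraph G ∧ Fintype.card V = 4 := by
  have hac' : a ≠ c := by rintro rfl; exact had hcd
  have hbd' : b ≠ d := by rintro rfl; exact had hab
  have had' : a ≠ d := by rintro rfl; exact hac hcd.symm
  refine isPathGraph_of_bijective ![a, b, c, d] ⟨fun i j hij => ?_, fun v => ?_⟩ fun i j => ?_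
  · fin_cases i <;> fin_cases j <;> first | rfl |
      simp [hab.ne, hab.ne', hbc.ne, hbc.ne', hcd.ne, hcd.ne', hac', hac'.symm, hbd', hbd'.symm,
        had', had'.symm] at hij
  · rcases hcov v with rfl | rfl | rfl | rfl
    exacts [⟨0, rfl⟩, ⟨1, rfl⟩, ⟨2, rfl⟩, ⟨3, rfl⟩]
  · fin_cases i <;> fin_cases j <;>
      simp [hab, hab.symm, hbc, hbc.symm, hcd, hcd.symm, hac, hbd, had, adj_comm _ c a,
        adj_comm _ d b, adj_comm _ d a]

/-- `N[z]ᶜ = {y}`, so everything else is adjacent to `z`; and `N[x]ᶜ`, a connected set of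
neighbours of `z`, is stable, hence has at most one vertex. -/
lemma eq_or_mem_compl_closedNbhd_of_pendant (htf : G.CliqueFree 3)
    (hnsc : ¬ HasFullStarCutset G) {x y z : V} (hxy : G.Adj x y) (hy : ∀ z, G.Adj y z → z = x)
    (hxz : G.Adj x z) (hzy : z ≠ y) :
    (∀ v, v = y ∨ v = x ∨ v = z ∨ v ∈ (closedNbhd G x)ᶜ) ∧
      (closedNbhd G x)ᶜ ⊆ G.neighborSet z ∧ (closedNbhd G x)ᶜ.Subsingleton := by
  have hyz : ¬ G.Adj y z := fun h => hxz.ne (hy z h).symm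
  have hcov : ∀ t, t = y ∨ t = z ∨ G.Adj z t := by
    have hy' : y ∈ (closedNbhd G z)ᶜ :=
      mem_compl_closedNbhd_iff.mpr ⟨hzy.symm, hyz ∘ Adj.symm⟩
    intro t
    by_contra! ht
    obtain ⟨c, hc, hyc⟩ := (reachableIn_compl_closedNbhd hnsc z y hy' t
      (mem_compl_closedNbhd_iff.mpr ht.2)).exists_adj_of_ne (Ne.symm ht.1)
    exact (mem_compl_closedNbhd_iff.mp hc).2 (hy c hyc ▸ hxz.symm)
  have hzN : (closedNbhd G x)ᶜ ⊆ G.neighborSet z := by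
    intro t ht
    obtain ⟨-, hxt⟩ := mem_compl_closedNbhd_iff.mp ht
    rcases hcov t with rfl | rfl | h
    exacts [absurd hxy hxt, absurd hxz hxt, h]
  refine ⟨fun v => ?_, hzN, fun t ht t' ht' => ?_⟩
  · rcases hcov v with rfl | rfl | hzv
    · exact .inl rfl
    · exact .inr (.inr (.inl rfl))
    by_cases hvx : v = x
    · exact .inr (.inl hvx)
    refine .inr (.inr (.inr (mem_compl_closedNbhd_iff.mpr ⟨hvx, fun hxv => ?_⟩)))
    exact not_adj_of_cliqueFree_three htf hxz hxv hzv
  · by_contra htt'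
    obtain ⟨c, hc, htc⟩ :=
      (reachableIn_compl_closedNbhd hnsc x t ht t' ht').exists_adj_of_ne htt'
    exact not_adj_of_cliqueFree_three htf (hzN ht) (hzN hc) htc

lemma isPathGraph_of_pendant [Fintype V] (hconn : G.Connected) (htf : G.CliqueFree 3)
    (hnsc : ¬ HasFullStarCutset G) {x y : V} (hxy : G.Adj x y) (hy : ∀ z, G.Adj y z → z = x) :
    IsPathGraph G ∧ Fintype.card V ≤ 4 := by
  by_cases hx : ∀ z, G.Adj x z → z = y
  · refine (isPathGraph_two (fun v => ?_) hxy.symm).imp_right fun h => by omega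
    induction (reachable_iff_reflTransGen y v).mp (hconn.preconnected y v) with
    | refl => exact .inl rfl
    | tail _ hcd ih =>
      rcases ih with rfl | rfl
      exacts [.inr (hy _ hcd), .inl (hx _ hcd)]
  push Not at hx
  obtain ⟨z, hxz, hzy⟩ := hx
  obtain ⟨hcov, hzN, hsub⟩ := eq_or_mem_compl_closedNbhd_of_pendant htf hnsc hxy hy hxz hzy
  have hyz : ¬ G.Adj y z := fun h => hxz.ne (hy z h).symm
  by_cases hz : ∃ t, G.Adj z t ∧ t ≠ x
  · obtain ⟨t, hzt, htx⟩ := hz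
    have hxt : ¬ G.Adj x t := fun hxt => not_adj_of_cliqueFree_three htf hxz hxt hzt
    have ht : t ∈ (closedNbhd G x)ᶜ := mem_compl_closedNbhd_iff.mpr ⟨htx, hxt⟩
    refine (isPathGraph_four (fun v => ?_) hxy.symm hxz hzt hyz hxt fun h => htx (hy t h)).imp_right
      (·.le)
    rcases hcov v with h | h | h | h
    exacts [.inl h, .inr (.inl h), .inr (.inr (.inl h)), .inr (.inr (.inr (hsub h ht)))]
  · push Not at hz
    refine (isPathGraph_three (fun v => ?_) hxy.symm hxz hyz hzy.symm).imp_right fun h => by omega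
    rcases hcov v with h | h | h | h
    exacts [.inl h, .inr (.inl h), .inr (.inr h),
      absurd (hz v (hzN h)) (mem_compl_closedNbhd_iff.mp h).1]

def EveryEdgeExtendsToInducedP3 (G : SimpleGraph V) : Prop :=
  ∀ ⦃x y⦄, G.Adj x y → ∃ z, G.Adj y z ∧ z ∈ (closedNbhd G x)ᶜ

lemma everyEdgeExtendsToInducedP3 [Fintype V] (hconn : G.Connected) (htf : G.CliqueFree 3)
    (hnsc : ¬ HasFullStarCutset G) (hnp : ¬ (IsPathGraph G ∧ Fintype.card V ≤ 4)) :
    G.EveryEdgeExtendsToInducedP3 := by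
  intro x y hxy
  obtain ⟨z, hyz, hzx⟩ : ∃ z, G.Adj y z ∧ z ≠ x := by
    by_contra! h
    exact hnp (isPathGraph_of_pendant hconn htf hnsc hxy h)
  exact ⟨z, hyz,
    mem_compl_closedNbhd_iff.mpr ⟨hzx, not_adj_of_cliqueFree_three htf hxy.symm hyz⟩⟩

lemma reachableIn_of_compl_closedNbhd_subset (hnsc : ¬ HasFullStarCutset G)
    (hext : G.EveryEdgeExtendsToInducedP3) {x : V} {T : Set V} (hxT : x ∉ T)
    (hT : (closedNbhd G x)ᶜ ⊆ T) : ∀ a ∈ T, ∀ b ∈ T, G.ReachableIn T a b := by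
  refine ReachableIn.of_core _
    (fun a ha b hb => (reachableIn_compl_closedNbhd hnsc x a ha b hb).mono hT) fun a ha => ?_
  by_cases ha' : a ∈ (closedNbhd G x)ᶜ
  · exact ⟨a, ha', .refl ha⟩
  · have hxa : G.Adj x a := by
      by_contra hxa
      exact ha' (mem_compl_closedNbhd_iff.mpr ⟨fun h => hxT (h ▸ ha), hxa⟩)
    obtain ⟨z, haz, hz⟩ := hext hxa
    exact ⟨z, hz, haz.reachableIn ha (hT hz)⟩

lemma reachableIn_deleteEdges (hnsc : ¬ HasFullStarCutset G)
    (hext : G.EveryEdgeExtendsToInducedP3) {u v : V} (huv : G.Adj u v) {T : Set V}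
    (hT : {u, v}ᶜ ⊆ T) :
    ∀ a ∈ T, ∀ b ∈ T, (G.deleteEdges {s(u, v)}).ReachableIn T a b := by
  have hadj :
      ∀ ⦃a b⦄, G.Adj a b → a ≠ u → b ≠ u → (G.deleteEdges {s(u, v)}).Adj a b :=
    fun a b hab ha hb => (deleteEdges_adj ..).mpr ⟨hab, fun h => by
      rcases Sym2.eq_iff.mp h with ⟨rfl, -⟩ | ⟨-, rfl⟩ <;> contradiction⟩
  have hNT : (closedNbhd G u)ᶜ ⊆ T := fun t ht => hT <| by
    obtain ⟨htu, hut⟩ := mem_compl_closedNbhd_iff.mp ht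
    rintro (rfl | rfl)
    exacts [htu rfl, hut huv]
  have hroute : ∀ a ∈ T, a ≠ u → G.Adj u a →
      ∃ b ∈ (closedNbhd G u)ᶜ, (G.deleteEdges {s(u, v)}).ReachableIn T a b := by
    intro a ha hau hua
    obtain ⟨z, haz, hz⟩ := hext hua
    exact ⟨z, hz, (hadj haz hau (mem_compl_closedNbhd_iff.mp hz).1).reachableIn ha (hNT hz)⟩
  refine ReachableIn.of_core (closedNbhd G u)ᶜ (fun a ha b hb => ?_) fun a ha => ?_
  · refine (reachableIn_compl_closedNbhd hnsc u a ha b hb).lift id (fun _ h => hNT h)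
      fun y hy z hz hyz => (hadj hyz ?_ ?_).reachableIn (hNT hy) (hNT hz)
    exacts [(mem_compl_closedNbhd_iff.mp hy).1, (mem_compl_closedNbhd_iff.mp hz).1]
  by_cases ha' : a ∈ (closedNbhd G u)ᶜ
  · exact ⟨a, ha', .refl ha⟩
  by_cases hau : a = u
  · subst hau
    obtain ⟨t, hat, ht⟩ := hext huv.symm
    have htv : t ≠ v := (mem_compl_closedNbhd_iff.mp ht).1
    have htT : t ∈ T := hT (by rintro (rfl | rfl); exacts [hat.ne rfl, htv rfl])
    obtain ⟨b, hb, htb⟩ := hroute t htT hat.ne' hat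
    refine ⟨b, hb, .trans (Adj.reachableIn ((deleteEdges_adj ..).mpr ⟨hat, fun h => htv ?_⟩)
      ha htT) htb⟩
    exact (Sym2.congr_right.mp h)
  · exact hroute a ha hau (by simpa [closedNbhd, hau] using ha')

end SimpleGraph

open SimpleGraph

lemma SimpleGraph.toMultigraph_m_pos_iff {V : Type} {G : SimpleGraph V} {u v : V} :
    0 < G.toMultigraph.m u v ↔ G.Adj u v := by
  by_cases h : G.Adj u v <;> simp [toMultigraph, h]

namespace MultiSubdivision

variable {V W : Type} {G : SimpleGraph V} {Gstar : SimpleGraph W} {k : ℕ}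
  (S : MultiSubdivision G.toMultigraph Gstar k)

/-- Edges of `G.toMultigraph` have multiplicity one, so `0` is the only index. -/
def edgePath {u v : V} (h : G.Adj u v) : Gstar.Walk (S.f u) (S.f v) :=
  S.path u v ⟨0, toMultigraph_m_pos_iff.mpr h⟩

variable {u v u' v' x y : V} {a b c : W}

lemma path_eq_edgePath (i : Fin (G.toMultigraph.m u v)) :
    S.path u v i = S.edgePath (toMultigraph_m_pos_iff.mp i.pos) := by
  have hi : (i : ℕ) = 0 := by
    have := i.isLt
    simp only [SimpleGraph.toMultigraph, toMultigraph_m_pos_iff.mp i.pos, ite_true] at this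
    omega
  exact congrArg _ (Fin.ext hi)

lemma isPath_edgePath (h : G.Adj u v) : (S.edgePath h).IsPath := S.isPath _ _ _

lemma edgePath_symm (h : G.Adj u v) : S.edgePath h.symm = (S.edgePath h).reverse :=
  S.path_symm u v ⟨0, toMultigraph_m_pos_iff.mpr h⟩

lemma mem_range_or_mem_walkInterior (a : W) :
    a ∈ Set.range S.f ∨ ∃ u v, ∃ h : G.Adj u v, a ∈ walkInterior (S.edgePath h) := by
  rcases S.vertex_cover a with h | ⟨u, v, i, ha⟩
  · exact .inl h
  · exact .inr ⟨u, v, _, S.path_eq_edgePath i ▸ ha⟩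

lemma exists_mem_edges_edgePath (hab : Gstar.Adj a b) :
    ∃ u v, ∃ h : G.Adj u v, s(a, b) ∈ (S.edgePath h).edges := by
  obtain ⟨u, v, i, he⟩ := S.edge_cover _ ((Gstar.mem_edgeSet).mpr hab)
  exact ⟨u, v, _, S.path_eq_edgePath i ▸ he⟩

lemma mem_walkInterior_edgePath_iff (h : G.Adj u v) :
    a ∈ walkInterior (S.edgePath h) ↔ a ∈ (S.edgePath h).support ∧ a ∉ Set.range S.f := by
  refine ⟨fun ha => ⟨ha.1, ?_⟩, fun ⟨ha, hf⟩ => ⟨ha, fun e => hf ⟨u, e.symm⟩,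
    fun e => hf ⟨v, e.symm⟩⟩⟩
  rintro ⟨x, rfl⟩
  exact S.interior_avoid u v _ x ha

lemma eq_or_eq_of_f_mem_support (h : G.Adj u v) (hx : S.f x ∈ (S.edgePath h).support) :
    x = u ∨ x = v := by
  by_contra! hne
  exact ((S.mem_walkInterior_edgePath_iff h).mp ⟨hx, fun e => hne.1 (S.f.injective e),
    fun e => hne.2 (S.f.injective e)⟩).2 ⟨x, rfl⟩

lemma sym2_eq_of_mem_walkInterior (h : G.Adj u v) (h' : G.Adj u' v')
    (ha : a ∈ walkInterior (S.edgePath h)) (ha' : a ∈ walkInterior (S.edgePath h')) :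
    s(u, v) = s(u', v') := by
  rcases S.interior_disjoint u v _ u' v' _ ⟨a, ha, ha'⟩ with
    ⟨rfl, rfl, -⟩ | ⟨rfl, rfl, -⟩
  exacts [rfl, Sym2.eq_swap]

lemma mem_support_edgePath_congr (h : G.Adj u v) (h' : G.Adj u' v')
    (he : s(u, v) = s(u', v')) :
    a ∈ (S.edgePath h).support ↔ a ∈ (S.edgePath h').support := by
  rcases Sym2.eq_iff.mp he with ⟨rfl, rfl⟩ | ⟨rfl, rfl⟩
  · rfl
  · simp [S.edgePath_symm h]

lemma mem_edges_edgePath_congr (h : G.Adj u v) (h' : G.Adj u' v')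
    (he : s(u, v) = s(u', v')) {e : Sym2 W} :
    e ∈ (S.edgePath h).edges ↔ e ∈ (S.edgePath h').edges := by
  rcases Sym2.eq_iff.mp he with ⟨rfl, rfl⟩ | ⟨rfl, rfl⟩
  · rfl
  · simp [S.edgePath_symm h]

lemma mem_walkInterior_edgePath_congr (h : G.Adj u v) (h' : G.Adj u' v')
    (he : s(u, v) = s(u', v')) :
    a ∈ walkInterior (S.edgePath h) ↔ a ∈ walkInterior (S.edgePath h') := by
  rw [mem_walkInterior_edgePath_iff, mem_walkInterior_edgePath_iff,
    S.mem_support_edgePath_congr h h' he]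

lemma mem_edges_of_adj_of_mem_walkInterior (h : G.Adj u v)
    (ha : a ∈ walkInterior (S.edgePath h)) (hab : Gstar.Adj a b) :
    s(a, b) ∈ (S.edgePath h).edges := by
  obtain ⟨u', v', h', he⟩ := S.exists_mem_edges_edgePath hab
  have ha' : a ∈ walkInterior (S.edgePath h') := (S.mem_walkInterior_edgePath_iff h').mpr
    ⟨(S.edgePath h').fst_mem_support_of_mem_edges he,
      ((S.mem_walkInterior_edgePath_iff h).mp ha).2⟩
  exact (S.mem_edges_edgePath_congr h h' (S.sym2_eq_of_mem_walkInterior h h' ha ha')).mpr he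

lemma sym2_eq_of_mem_support (h : G.Adj u v) (h' : G.Adj u' v') (hbc : b ≠ c)
    (hb : b ∈ (S.edgePath h).support) (hc : c ∈ (S.edgePath h).support)
    (hb' : b ∈ (S.edgePath h').support) (hc' : c ∈ (S.edgePath h').support) :
    s(u, v) = s(u', v') := by
  have interior : ∀ {d}, d ∈ (S.edgePath h).support → d ∈ (S.edgePath h').support →
      d ∉ Set.range S.f → s(u, v) = s(u', v') := fun hd hd' hdf =>
    S.sym2_eq_of_mem_walkInterior h h' ((S.mem_walkInterior_edgePath_iff h).mpr ⟨hd, hdf⟩)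
      ((S.mem_walkInterior_edgePath_iff h').mpr ⟨hd', hdf⟩)
  by_cases hbf : b ∈ Set.range S.f
  · by_cases hcf : c ∈ Set.range S.f
    · obtain ⟨⟨y, rfl⟩, ⟨z, rfl⟩⟩ := And.intro hbf hcf
      have mem : ∀ {x u v} (h : G.Adj u v), S.f x ∈ (S.edgePath h).support → x ∈ s(u, v) :=
        fun h hx => Sym2.mem_iff.mpr (S.eq_or_eq_of_f_mem_support h hx)
      exact Sym2.eq_of_ne_mem (fun e => hbc (congrArg S.f e)) (mem h hb) (mem h hc) (mem h' hb')
        (mem h' hc')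
    · exact interior hc hc' hcf
  · exact interior hb hb' hbf

lemma exists_adj_of_adj_branch (hxy : Gstar.Adj (S.f x) (S.f y)) :
    ∃ h : G.Adj x y, walkInterior (S.edgePath h) = ∅ := by
  obtain ⟨u, v, h, he⟩ := S.exists_mem_edges_edgePath hxy
  have mem : ∀ {z}, S.f z ∈ (S.edgePath h).support → z ∈ s(u, v) :=
    fun hz => Sym2.mem_iff.mpr (S.eq_or_eq_of_f_mem_support h hz)
  have hxy' : s(x, y) = s(u, v) := Sym2.eq_of_ne_mem (fun e => hxy.ne (congrArg S.f e))
    (Sym2.mem_mk_left x y) (Sym2.mem_mk_right x y)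
    (mem ((S.edgePath h).fst_mem_support_of_mem_edges he))
    (mem ((S.edgePath h).snd_mem_support_of_mem_edges he))
  have hG : G.Adj x y := by
    rcases Sym2.eq_iff.mp hxy' with ⟨rfl, rfl⟩ | ⟨rfl, rfl⟩
    exacts [h, h.symm]
  refine ⟨hG, Set.eq_empty_of_forall_notMem fun z hz => ?_⟩
  have hedge := (S.mem_edges_edgePath_congr hG h hxy').mpr he
  rw [(S.isPath_edgePath hG).eq_adj_toWalk_of_mem_edges hedge] at hz
  simp only [walkInterior, Walk.support_cons, Walk.support_nil, List.mem_cons,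
    List.not_mem_nil, or_false, Set.mem_ofPred_eq] at hz
  tauto

lemma adj_of_adj_branch (hxy : Gstar.Adj (S.f x) (S.f y)) : G.Adj x y :=
  (S.exists_adj_of_adj_branch hxy).1

lemma not_adj_of_mem_walkInterior (h : G.Adj u v) (ha : a ∈ walkInterior (S.edgePath h))
    (hab : Gstar.Adj a b) (hac : Gstar.Adj a c) : ¬ Gstar.Adj b c := fun hbc => by
  have e₁ := S.mem_edges_of_adj_of_mem_walkInterior h ha hab
  have e₃ := S.mem_edges_of_adj_of_mem_walkInterior h ha hac
  obtain ⟨u', v', h', he⟩ := S.exists_mem_edges_edgePath hbc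
  have hsame := S.sym2_eq_of_mem_support h h' hbc.ne
    ((S.edgePath h).snd_mem_support_of_mem_edges e₁)
    ((S.edgePath h).snd_mem_support_of_mem_edges e₃)
    ((S.edgePath h').fst_mem_support_of_mem_edges he)
    ((S.edgePath h').snd_mem_support_of_mem_edges he)
  exact (S.isPath_edgePath h).not_triangle hab.ne hac.ne hbc.ne e₁
    ((S.mem_edges_edgePath_congr h h' hsame).mpr he) e₃

lemma cliqueFree_three (S : MultiSubdivision G.toMultigraph Gstar k) (htf : G.CliqueFree 3) :
    Gstar.CliqueFree 3 := by
  classical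
  intro t ht
  obtain ⟨a, b, c, hab, hac, hbc, rfl⟩ := is3Clique_iff.mp ht
  rcases S.mem_range_or_mem_walkInterior a with ⟨x, rfl⟩ | ⟨_, _, h, ha⟩
  · rcases S.mem_range_or_mem_walkInterior b with ⟨y, rfl⟩ | ⟨_, _, h, hb⟩
    · rcases S.mem_range_or_mem_walkInterior c with ⟨z, rfl⟩ | ⟨_, _, h, hc⟩
      · exact not_adj_of_cliqueFree_three htf (S.adj_of_adj_branch hab) (S.adj_of_adj_branch hac)
          (S.adj_of_adj_branch hbc)
      · exact S.not_adj_of_mem_walkInterior h hc hac.symm hbc.symm hab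
    · exact S.not_adj_of_mem_walkInterior h hb hab.symm hbc hac
  · exact S.not_adj_of_mem_walkInterior h ha hab hac hbc

lemma reachableIn_of_branch {H : SimpleGraph V} (hH : H ≤ G) {s : Set W}
    (hcore : ∀ y ∈ S.f ⁻¹' s, ∀ z ∈ S.f ⁻¹' s, H.ReachableIn (S.f ⁻¹' s) y z)
    (hpath : ∀ ⦃y z⦄ (h : H.Adj y z), S.f y ∈ s → S.f z ∈ s →
      walkInterior (S.edgePath (hH h)) ⊆ s)
    (hanchor : ∀ a ∈ s, ∃ y, S.f y ∈ s ∧ Gstar.ReachableIn s a (S.f y)) :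
    ∀ a ∈ s, ∀ b ∈ s, Gstar.ReachableIn s a b := by
  refine ReachableIn.of_core (S.f '' (S.f ⁻¹' s)) ?_ fun a ha => ?_
  · rintro _ ⟨y, hy, rfl⟩ _ ⟨z, hz, rfl⟩
    exact (hcore y hy z hz).lift S.f (fun _ h => h) fun y hy z hz h =>
      (S.edgePath (hH h)).reachableIn_of_walkInterior_subset hy hz (hpath h hy hz)
  · obtain ⟨y, hy, hay⟩ := hanchor a ha
    exact ⟨S.f y, ⟨y, hy, rfl⟩, hay⟩

lemma reachableIn_end_of_mem_walkInterior (h : G.Adj u v)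
    (ha : a ∈ walkInterior (S.edgePath h)) :
    Gstar.ReachableIn {c | c ∈ (S.edgePath h).support ∧ c ≠ S.f u ∧
      (s(S.f u, c) ∈ (S.edgePath h).edges → c = a)} a (S.f v) :=
  (S.isPath_edgePath h).reachableIn_dropUntil ha.1 ha.2.1

lemma connected (S : MultiSubdivision G.toMultigraph Gstar k) (hconn : G.Connected) :
    Gstar.Connected := by
  have hreach := S.reachableIn_of_branch le_rfl (s := Set.univ)
    (fun y _ z _ => ⟨(hconn.preconnected y z).some, fun _ _ => trivial⟩)
    (fun _ _ _ _ _ => Set.subset_univ _) fun a _ => ?_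
  · have : Nonempty W := ⟨S.f hconn.nonempty.some⟩
    exact ⟨fun a b => (hreach a trivial b trivial).reachable⟩
  rcases S.mem_range_or_mem_walkInterior a with ⟨y, rfl⟩ | ⟨u, v, h, ha⟩
  · exact ⟨y, trivial, .refl trivial⟩
  · exact ⟨v, trivial, (S.reachableIn_end_of_mem_walkInterior h ha).mono (Set.subset_univ _)⟩

lemma eq_or_eq_of_adj_of_mem_walkInterior (h : G.Adj u v) (hc : c ∈ walkInterior (S.edgePath h))
    (hxc : Gstar.Adj (S.f x) c) : (x = u ∨ x = v) ∧ s(S.f x, c) ∈ (S.edgePath h).edges := by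
  have he : s(S.f x, c) ∈ (S.edgePath h).edges :=
    Sym2.eq_swap ▸ S.mem_edges_of_adj_of_mem_walkInterior h hc hxc.symm
  exact ⟨S.eq_or_eq_of_f_mem_support h ((S.edgePath h).fst_mem_support_of_mem_edges he), he⟩

lemma exists_reachableIn_compl_closedNbhd_branch (htf : G.CliqueFree 3) {x : V}
    (ha : a ∈ (closedNbhd Gstar (S.f x))ᶜ) :
    ∃ y, S.f y ∈ (closedNbhd Gstar (S.f x))ᶜ ∧
      Gstar.ReachableIn (closedNbhd Gstar (S.f x))ᶜ a (S.f y) := by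
  rcases S.mem_range_or_mem_walkInterior a with ⟨y, rfl⟩ | ⟨u, v, h, hau⟩
  · exact ⟨y, ha, .refl ha⟩
  -- Both ends removed would make the path a single edge, or `x u v` a triangle.
  wlog hv : S.f v ∈ (closedNbhd Gstar (S.f x))ᶜ generalizing u v
  · by_cases hu : S.f u ∈ (closedNbhd Gstar (S.f x))ᶜ
    · exact this v u h.symm ((S.mem_walkInterior_edgePath_congr h.symm h Sym2.eq_swap).mpr hau) hu
    have hout : ∀ y, S.f y ∉ (closedNbhd Gstar (S.f x))ᶜ →
        y = x ∨ Gstar.Adj (S.f x) (S.f y) := fun y hy => by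
      by_contra! hne
      exact hy (mem_compl_closedNbhd_iff.mpr ⟨fun e => hne.1 (S.f.injective e), hne.2⟩)
    have hlong : ¬ Gstar.Adj (S.f u) (S.f v) := fun huv => by
      obtain ⟨_, hempty⟩ := S.exists_adj_of_adj_branch huv
      exact Set.notMem_empty a (hempty ▸ hau)
    rcases hout u hu with rfl | hxu <;> rcases hout v hv with rfl | hxv
    · exact absurd rfl h.ne
    · exact absurd hxv hlong
    · exact absurd hxu.symm hlong
    · exact absurd h
        (not_adj_of_cliqueFree_three htf (S.adj_of_adj_branch hxu) (S.adj_of_adj_branch hxv))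
  refine ⟨v, hv, (S.reachableIn_end_of_mem_walkInterior h hau).mono fun c hc' => ?_⟩
  obtain ⟨hc, hcu, hcu'⟩ := hc'
  rcases eq_or_eq_or_mem_walkInterior hc with rfl | rfl | hc
  · exact absurd rfl hcu
  · exact hv
  refine mem_compl_closedNbhd_iff.mpr ⟨fun e => ((S.mem_walkInterior_edgePath_iff h).mp hc).2
    ⟨x, e.symm⟩, fun hxc => ?_⟩
  obtain ⟨rfl | rfl, he⟩ := S.eq_or_eq_of_adj_of_mem_walkInterior h hc hxc
  · exact (mem_compl_closedNbhd_iff.mp (hcu' he ▸ ha)).2 hxc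
  · exact (mem_compl_closedNbhd_iff.mp hv).1 rfl

lemma preconnected_compl_closedNbhd_branch (htf : G.CliqueFree 3) (hnsc : ¬ HasFullStarCutset G)
    (hext : G.EveryEdgeExtendsToInducedP3) (x : V) :
    (Gstar.induce (closedNbhd Gstar (S.f x))ᶜ).Preconnected := by
  rw [preconnected_induce_iff_reachableIn]
  refine S.reachableIn_of_branch le_rfl ?_ (fun y z h hy hz c hc => ?_)
    fun a ha => S.exists_reachableIn_compl_closedNbhd_branch htf ha
  · refine reachableIn_of_compl_closedNbhd_subset hnsc hext
      (fun hx => (mem_compl_closedNbhd_iff.mp hx).1 rfl) fun y hy => ?_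
    obtain ⟨hyx, hxy⟩ := mem_compl_closedNbhd_iff.mp hy
    exact mem_compl_closedNbhd_iff.mpr
      ⟨fun e => hyx (S.f.injective e), fun h => hxy (S.adj_of_adj_branch h)⟩
  · refine mem_compl_closedNbhd_iff.mpr ⟨?_, fun hxc => ?_⟩
    · rintro rfl
      exact ((S.mem_walkInterior_edgePath_iff _).mp hc).2 ⟨x, rfl⟩
    · rcases (S.eq_or_eq_of_adj_of_mem_walkInterior _ hc hxc).1 with rfl | rfl
      exacts [(mem_compl_closedNbhd_iff.mp hy).1 rfl, (mem_compl_closedNbhd_iff.mp hz).1 rfl]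

variable {u₀ v₀ : V} {w : W}

lemma mem_compl_closedNbhd_iff_of_mem_walkInterior (h₀ : G.Adj u₀ v₀)
    (hw : w ∈ walkInterior (S.edgePath h₀)) :
    c ∈ (closedNbhd Gstar w)ᶜ ↔ c ≠ w ∧ s(w, c) ∉ (S.edgePath h₀).edges := by
  rw [mem_compl_closedNbhd_iff]
  exact and_congr_right fun _ => not_congr
    ⟨S.mem_edges_of_adj_of_mem_walkInterior h₀ hw, (S.edgePath h₀).adj_of_mem_edges⟩

lemma walkInterior_subset_compl_closedNbhd (h₀ : G.Adj u₀ v₀)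
    (hw : w ∈ walkInterior (S.edgePath h₀)) (h : G.Adj u v) (hne : s(u, v) ≠ s(u₀, v₀)) :
    walkInterior (S.edgePath h) ⊆ (closedNbhd Gstar w)ᶜ := by
  intro c hc
  refine (S.mem_compl_closedNbhd_iff_of_mem_walkInterior h₀ hw).mpr
    ⟨fun hcw => hne (S.sym2_eq_of_mem_walkInterior h h₀ hc (hcw ▸ hw)),
      fun hwc => hne (S.sym2_eq_of_mem_walkInterior h h₀ hc ?_)⟩
  exact (S.mem_walkInterior_edgePath_iff h₀).mpr
    ⟨(S.edgePath h₀).snd_mem_support_of_mem_edges hwc,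
      ((S.mem_walkInterior_edgePath_iff h).mp hc).2⟩

lemma f_mem_compl_closedNbhd_of_mem_walkInterior (h₀ : G.Adj u₀ v₀)
    (hw : w ∈ walkInterior (S.edgePath h₀)) (hy : y ∉ s(u₀, v₀)) :
    S.f y ∈ (closedNbhd Gstar w)ᶜ := by
  refine (S.mem_compl_closedNbhd_iff_of_mem_walkInterior h₀ hw).mpr
    ⟨fun e => ((S.mem_walkInterior_edgePath_iff h₀).mp hw).2 ⟨y, e⟩,
      fun hwy => hy (Sym2.mem_iff.mpr (S.eq_or_eq_of_f_mem_support h₀ ?_))⟩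
  exact (S.edgePath h₀).snd_mem_support_of_mem_edges hwy

lemma exists_reachableIn_compl_closedNbhd_of_mem_walkInterior (h₀ : G.Adj u₀ v₀)
    (hw : w ∈ walkInterior (S.edgePath h₀)) (ha : a ∈ (closedNbhd Gstar w)ᶜ) :
    ∃ y, S.f y ∈ (closedNbhd Gstar w)ᶜ ∧
      Gstar.ReachableIn (closedNbhd Gstar w)ᶜ a (S.f y) := by
  have hs := fun {c} => S.mem_compl_closedNbhd_iff_of_mem_walkInterior (c := c) h₀ hw
  rcases S.mem_range_or_mem_walkInterior a with ⟨y, rfl⟩ | ⟨u, v, h, hau⟩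
  · exact ⟨y, ha, .refl ha⟩
  by_cases he : s(u, v) = s(u₀, v₀)
  · obtain ⟨e, he', hreach⟩ := (S.isPath_edgePath h₀).exists_reachableIn_avoiding
      ((S.mem_walkInterior_edgePath_congr h h₀ he).mp hau).1 (hs.mp ha).1 (hs.mp ha).2
    replace hreach := hreach.mono fun c hc => hs.mpr hc.2
    rcases he' with rfl | rfl
    exacts [⟨u₀, hreach.right_mem, hreach⟩, ⟨v₀, hreach.right_mem, hreach⟩]
  wlog hv : v ∉ s(u₀, v₀) generalizing u v
  · have hu : u ∉ s(u₀, v₀) := fun hu => he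
      (Sym2.eq_of_ne_mem h.ne (Sym2.mem_mk_left u v) (Sym2.mem_mk_right u v) hu (not_not.mp hv))
    exact this v u h.symm ((S.mem_walkInterior_edgePath_congr h.symm h Sym2.eq_swap).mpr hau)
      (fun e => he (Sym2.eq_swap.trans e)) hu
  have hfv := S.f_mem_compl_closedNbhd_of_mem_walkInterior h₀ hw hv
  refine ⟨v, hfv, (S.reachableIn_end_of_mem_walkInterior h hau).mono fun c hc' => ?_⟩
  obtain ⟨hc, hcu, -⟩ := hc'
  rcases eq_or_eq_or_mem_walkInterior hc with rfl | rfl | hc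
  exacts [absurd rfl hcu, hfv, S.walkInterior_subset_compl_closedNbhd h₀ hw h he hc]

lemma preconnected_compl_closedNbhd_of_mem_walkInterior (hnsc : ¬ HasFullStarCutset G)
    (hext : G.EveryEdgeExtendsToInducedP3) (h₀ : G.Adj u₀ v₀)
    (hw : w ∈ walkInterior (S.edgePath h₀)) :
    (Gstar.induce (closedNbhd Gstar w)ᶜ).Preconnected := by
  rw [preconnected_induce_iff_reachableIn]
  refine S.reachableIn_of_branch (deleteEdges_le _) (reachableIn_deleteEdges hnsc hext h₀
    fun y hy => S.f_mem_compl_closedNbhd_of_mem_walkInterior h₀ hw (by simpa [not_or] using hy))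
    (fun _ _ h _ _ =>
      S.walkInterior_subset_compl_closedNbhd h₀ hw _ ((deleteEdges_adj ..).mp h).2)
    fun a ha => S.exists_reachableIn_compl_closedNbhd_of_mem_walkInterior h₀ hw ha

end MultiSubdivision

theorem subdivision_preserves_no_full_star_cutset_general
    {V W : Type} [Fintype V] (G : SimpleGraph V) (Gstar : SimpleGraph W)
    (hconn : G.Connected) (htf : G.CliqueFree 3) (hnsc : ¬ HasFullStarCutset G)
    (hnp : ¬ (IsPathGraph G ∧ Fintype.card V ≤ 4))
    (hsub : IsSubdivision G Gstar) :
    Gstar.Connected ∧ Gstar.CliqueFree 3 ∧ ¬ HasFullStarCutset Gstar := by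
  obtain ⟨S⟩ := hsub
  have hext := everyEdgeExtendsToInducedP3 hconn htf hnsc hnp
  refine ⟨S.connected hconn, S.cliqueFree_three htf, fun ⟨w, hw⟩ => hw ?_⟩
  rcases S.mem_range_or_mem_walkInterior w with ⟨x, rfl⟩ | ⟨u, v, h, hw⟩
  · exact S.preconnected_compl_closedNbhd_branch htf hnsc hext x
  · exact S.preconnected_compl_closedNbhd_of_mem_walkInterior hnsc hext h hw

/-- If `G` is a connected triangle-free graph with no full
star-cutset and `G` is not a path on at most 4 vertices, then every subdivision
`G*` of `G` is a connected triangle-free graph with no full star-cutset. -/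
theorem subdivision_preserves_no_full_star_cutset
    {V W : Type} [Fintype V] [Fintype W] (G : SimpleGraph V) (Gstar : SimpleGraph W)
    (hconn : G.Connected) (htf : G.CliqueFree 3) (hnsc : ¬ HasFullStarCutset G)
    (hnp : ¬ (IsPathGraph G ∧ Fintype.card V ≤ 4))
    (hsub : IsSubdivision G Gstar) :
    Gstar.Connected ∧ Gstar.CliqueFree 3 ∧ ¬ HasFullStarCutset Gstar :=
  subdivision_preserves_no_full_star_cutset_general G Gstar hconn htf hnsc hnp hsub
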